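/- Well-definedness of v_min and v_max: Let H be a well-formed history, Q a query that returns in H, and 𝓗 a deterministic quantitative sequential specification. Then the set {ret(Q, τ_𝓗(L)) : L a linearization of H?} of values that Q may return across all linearizations of the skeleton of H is nonempty and finite; in particular its minimum and maximum exist. -/

import Mathlib

/-- An event in a history: an invocation or a response, by a process
(identified by a natural number), of an operation (identified by a unique
operation id) on an object from `X`.  Operations are updates or queries;
a response of a query carries `some r` for a return value `r : V`, or
`none` standing for the undefined value `?`. -/
inductive Ev (X V : Type) where
  | inv (proc : ℕ) (opId : ℕ) (obj : X) (isQuery : Bool) (arg : ℕ)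
  | rsp (proc : ℕ) (opId : ℕ) (obj : X) (isQuery : Bool) (ret : Option V)

namespace Ev

variable {X V : Type}

def opId : Ev X V → ℕ
  | .inv _ o _ _ _ => o
  | .rsp _ o _ _ _ => o

def proc : Ev X V → ℕ
  | .inv p _ _ _ _ => p
  | .rsp p _ _ _ _ => p

def obj : Ev X V → X
  | .inv _ _ x _ _ => x
  | .rsp _ _ x _ _ => x

def isQuery : Ev X V → Bool
  | .inv _ _ _ q _ => q
  | .rsp _ _ _ q _ => q

def isInv : Ev X V → Bool
  | .inv _ _ _ _ _ => true
  | .rsp _ _ _ _ _ => false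

def retVal : Ev X V → Option V
  | .inv _ _ _ _ _ => none
  | .rsp _ _ _ _ r => r

/-- The skeleton of an event: replace the return value of a response by `?`. -/
def skel : Ev X V → Ev X V
  | .inv p o x q a => .inv p o x q a
  | .rsp p o x q _ => .rsp p o x q none

end Ev

namespace Hist

variable {X V : Type}

/-- The skeleton `H?` of a history `H`: all return values replaced by `?`. -/
def skeleton (H : List (Ev X V)) : List (Ev X V) := H.map Ev.skel

def IsSkeleton (H : List (Ev X V)) : Prop := skeleton H = H

/-- The event at index `i` of `H` is an invocation of operation `o`. -/
def InvAt (H : List (Ev X V)) (o i : ℕ) : Prop :=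
  ∃ e, H[i]? = some e ∧ e.isInv = true ∧ e.opId = o

/-- The event at index `i` of `H` is a response of operation `o`. -/
def RspAt (H : List (Ev X V)) (o i : ℕ) : Prop :=
  ∃ e, H[i]? = some e ∧ e.isInv = false ∧ e.opId = o

def Invoked (H : List (Ev X V)) (o : ℕ) : Prop := ∃ i, InvAt H o i

def Responded (H : List (Ev X V)) (o : ℕ) : Prop := ∃ i, RspAt H o i

/-- Operation `o` is pending in `H`: it is invoked but never responds. -/
def Pending (H : List (Ev X V)) (o : ℕ) : Prop := Invoked H o ∧ ¬ Responded H o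

/-- `o1 ≺_H o2`: a response of `o1` occurs before an invocation of `o2`. -/
def Precedes (H : List (Ev X V)) (o1 o2 : ℕ) : Prop :=
  ∃ i j, i < j ∧ RspAt H o1 i ∧ InvAt H o2 j

/-- Well-formedness of a history: operation ids identify operations uniquely,
every response is preceded by a matching invocation, and no process has two
concurrent operations. -/
structure WellFormed (H : List (Ev X V)) : Prop where
  uniqueInv : ∀ o i j, InvAt H o i → InvAt H o j → i = j
  uniqueRsp : ∀ o i j, RspAt H o i → RspAt H o j → i = j
  rspMatched : ∀ j e', H[j]? = some e' → e'.isInv = false →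
    ∃ (i : ℕ) (e : Ev X V), i < j ∧ H[i]? = some e ∧ e.isInv = true ∧ e.opId = e'.opId ∧
      e.proc = e'.proc ∧ e.obj = e'.obj ∧ e.isQuery = e'.isQuery
  procSeq : ∀ i j e e', H[i]? = some e → H[j]? = some e' →
    e.isInv = true → e'.isInv = true → e.proc = e'.proc → i < j →
    ∃ k, k < j ∧ RspAt H e.opId k

/-- A sequential history alternates invocations with matching responses,
beginning with an invocation. -/
def Sequential (H : List (Ev X V)) : Prop :=
  ∀ k e, H[k]? = some e →
    (k % 2 = 0 → e.isInv = true) ∧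
    (k % 2 = 1 → e.isInv = false ∧
      ∃ e', H[k - 1]? = some e' ∧ e'.isInv = true ∧ e'.opId = e.opId ∧
        e'.proc = e.proc ∧ e'.obj = e.obj ∧ e'.isQuery = e.isQuery)

/-- Every invoked operation has a response. -/
def Complete (H : List (Ev X V)) : Prop := ∀ o, Invoked H o → Responded H o

/-- `H''` is a completion of `H`: remove the events of some pending operations
and append matching responses for (some of) the remaining pending operations. -/
def IsCompletion (H H'' : List (Ev X V)) : Prop :=
  ∃ (P : ℕ → Bool) (R : List (Ev X V)),
    (∀ o, P o = true → Pending H o) ∧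
    (∀ e ∈ R, e.isInv = false ∧ Pending H e.opId ∧ P e.opId = false ∧
      ∃ (i : ℕ) (e' : Ev X V), H[i]? = some e' ∧ e'.isInv = true ∧ e'.opId = e.opId ∧
        e'.proc = e.proc ∧ e'.obj = e.obj ∧ e'.isQuery = e.isQuery) ∧
    H'' = H.filter (fun e => !(P e.opId)) ++ R

/-- `L` is a linearization of `H`: `L` is a complete sequential history
containing the same invocations and responses as some completion of `H`,
and `L` preserves the precedence order `≺_H`. -/
def Linearization (L H : List (Ev X V)) : Prop :=
  Sequential L ∧ Complete L ∧
  (∃ H'', IsCompletion H H'' ∧ L.Perm H'') ∧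
  (∀ o1 o2, Precedes H o1 o2 → Invoked L o2 → Precedes L o1 o2)

/-- Query operation `o` returns the value `v` in `H`. -/
def QueryReturns (H : List (Ev X V)) (o : ℕ) (v : V) : Prop :=
  ∃ (i : ℕ) (e : Ev X V), H[i]? = some e ∧ e.isInv = false ∧ e.isQuery = true ∧
    e.opId = o ∧ e.retVal = some v

/-- Query operation `o` completes (has a response) in `H`. -/
def QueryCompletes (H : List (Ev X V)) (o : ℕ) : Prop :=
  ∃ (i : ℕ) (e : Ev X V), H[i]? = some e ∧ e.isInv = false ∧ e.isQuery = true ∧ e.opId = o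

/-- The return value (if any) of query `o` in `H`. -/
def retOf (H : List (Ev X V)) (o : ℕ) : Option V :=
  (H.find? (fun e => !e.isInv && e.isQuery && e.opId == o)).bind Ev.retVal

/-- `H|ₓ`: the projection of `H` onto the events on object `x`. -/
def proj [DecidableEq X] (H : List (Ev X V)) (x : X) : List (Ev X V) :=
  H.filter (fun e => decide (e.obj = x))

end Hist

/-- A deterministic quantitative sequential specification: a set of sequential
histories such that for every sequential skeleton history `S` there is exactly
one history `tau S` in the set whose skeleton is `S`; queries in specification
histories return actual (defined) values. -/
structure DetSpec (X V : Type) where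
  mem : List (Ev X V) → Prop
  mem_sequential : ∀ H, mem H → Hist.Sequential H
  tau : List (Ev X V) → List (Ev X V)
  tau_mem : ∀ S, Hist.Sequential S → Hist.IsSkeleton S → mem (tau S)
  tau_skeleton : ∀ S, Hist.Sequential S → Hist.IsSkeleton S → Hist.skeleton (tau S) = S
  tau_unique : ∀ S H, Hist.Sequential S → Hist.IsSkeleton S → mem H →
    Hist.skeleton H = S → H = tau S
  total : ∀ H, mem H → ∀ (i : ℕ) (e : Ev X V), H[i]? = some e → e.isInv = false → e.isQuery = true →
    ∃ v, e.retVal = some v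

/-- A history `H` is IVL w.r.t. specification `spec`: there are two
linearizations `H1, H2` of the skeleton `H?` such that the return value of
every query that returns in `H` is bounded between its return values in
`τ(H1)` and `τ(H2)`. -/
def IVL {X V : Type} [LinearOrder V] (H : List (Ev X V)) (spec : DetSpec X V) : Prop :=
  ∃ H1 H2 : List (Ev X V),
    Hist.IsSkeleton H1 ∧ Hist.IsSkeleton H2 ∧
    Hist.Linearization H1 (Hist.skeleton H) ∧ Hist.Linearization H2 (Hist.skeleton H) ∧
    ∀ o v, Hist.QueryReturns H o v →
      ∃ v1 v2, Hist.QueryReturns (spec.tau H1) o v1 ∧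
        Hist.QueryReturns (spec.tau H2) o v2 ∧ v1 ≤ v ∧ v ≤ v2

/-- The set of values a query may return across all linearizations of the
skeleton of `H`, under specification `spec`. -/
def linRetSet {X V : Type} [LinearOrder V]
    (H : List (Ev X V)) (spec : DetSpec X V) (o : ℕ) : Set V :=
  {r | ∃ L : List (Ev X V), Hist.IsSkeleton L ∧
    Hist.Linearization L (Hist.skeleton H) ∧ Hist.QueryReturns (spec.tau L) o r}

/-!
A linearization always exists: order the operations of `H?` that respond by their responses and
put each invocation right before its response. This respects real-time precedence, and the query,
which responds in `H`, responds in it, so the specification assigns it a value. There are only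
finitely many linearizations, since each is a duplicate-free list of events of `H?` and of
`?`-responses to its invocations. A nonempty finite subset of a linear order has a minimum and a
maximum.
-/

namespace List

variable {α : Type*}

theorem pair_sublist_iff_getElem? {a b : α} {l : List α} :
    [a, b] <+ l ↔ ∃ i j : ℕ, i < j ∧ l[i]? = some a ∧ l[j]? = some b := by
  constructor
  · intro h
    obtain ⟨f, hf⟩ := sublist_iff_exists_orderEmbedding_getElem?_eq.mp h
    exact ⟨f 0, f 1, f.strictMono zero_lt_one, by simpa using (hf 0).symm,
      by simpa using (hf 1).symm⟩
  · rintro ⟨i, j, hij, hi, hj⟩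
    rw [← take_append_drop j l]
    refine (singleton_sublist.mpr ?_).append (singleton_sublist.mpr ?_)
    · exact mem_of_getElem? ((getElem?_take_of_lt hij).trans hi)
    · exact mem_of_getElem? (l := drop j l) (i := 0) (by simpa using hj)

theorem finite_setOf_subperm (l : List α) : {l' | l' <+~ l}.Finite :=
  (l.sublists.flatMap permutations).finite_toSet.subset fun _ ⟨s, hs, hsl⟩ =>
    mem_flatMap.mpr ⟨s, mem_sublists.mpr hsl, mem_permutations.mpr hs.symm⟩

theorem getElem?_flatMap_pair (f : α → α) (l : List α) (n : ℕ) :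
    (l.flatMap fun a => [f a, a])[n]? = l[n / 2]?.map (if n % 2 = 0 then f else id) := by
  induction l generalizing n with
  | nil => simp
  | cons a l ih =>
    match n with
    | 0 => simp
    | 1 => simp
    | n + 2 =>
      simp only [flatMap_cons, cons_append, nil_append, getElem?_cons_succ]
      rw [ih n]
      simp [Nat.add_div_right, Nat.add_mod_right]

theorem Subperm.nodup {l₁ l₂ : List α} (h : l₁ <+~ l₂) (hl₂ : l₂.Nodup) : l₁.Nodup :=
  let ⟨_, hp, hs⟩ := h
  (hs.nodup hl₂).perm hp

end List

namespace Ev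

variable {X V : Type}

@[simp] theorem skel_opId (e : Ev X V) : e.skel.opId = e.opId := by cases e <;> rfl
@[simp] theorem skel_isInv (e : Ev X V) : e.skel.isInv = e.isInv := by cases e <;> rfl
@[simp] theorem skel_proc (e : Ev X V) : e.skel.proc = e.proc := by cases e <;> rfl
@[simp] theorem skel_obj (e : Ev X V) : e.skel.obj = e.obj := by cases e <;> rfl
@[simp] theorem skel_isQuery (e : Ev X V) : e.skel.isQuery = e.isQuery := by cases e <;> rfl
@[simp] theorem skel_skel (e : Ev X V) : e.skel.skel = e.skel := by cases e <;> rfl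

def toRsp (e : Ev X V) : Ev X V := .rsp e.proc e.opId e.obj e.isQuery none

theorem skel_eq_toRsp {e : Ev X V} (he : e.isInv = false) : e.skel = e.toRsp := by
  cases e
  · simp [isInv] at he
  · rfl

def IsInvOf (i r : Ev X V) : Prop :=
  i.isInv = true ∧ i.opId = r.opId ∧ i.proc = r.proc ∧ i.obj = r.obj ∧ i.isQuery = r.isQuery

theorem IsInvOf.toRsp_eq {i r : Ev X V} (h : IsInvOf i r) : i.toRsp = r.toRsp := by
  obtain ⟨-, hop, hp, hx, hq⟩ := h
  simp only [toRsp, hop, hp, hx, hq]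

end Ev

namespace Hist

open scoped List

variable {X V : Type} {S L H : List (Ev X V)} {o : ℕ}

theorem invoked_iff : Invoked H o ↔ ∃ e ∈ H, e.isInv = true ∧ e.opId = o := by
  simp only [Invoked, InvAt, List.mem_iff_getElem?]
  grind

theorem responded_iff : Responded H o ↔ ∃ e ∈ H, e.isInv = false ∧ e.opId = o := by
  simp only [Responded, RspAt, List.mem_iff_getElem?]
  grind

theorem precedes_iff_sublist {o₁ o₂ : ℕ} : Precedes H o₁ o₂ ↔ ∃ a b, [a, b] <+ H ∧
    a.isInv = false ∧ a.opId = o₁ ∧ b.isInv = true ∧ b.opId = o₂ := by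
  simp only [Precedes, RspAt, InvAt, List.pair_sublist_iff_getElem?]
  constructor
  · rintro ⟨i, j, hij, ⟨a, hi, ha⟩, ⟨b, hj, hb⟩⟩
    exact ⟨a, b, ⟨i, j, hij, hi, hj⟩, ha.1, ha.2, hb.1, hb.2⟩
  · rintro ⟨a, b, ⟨i, j, hij, hi, hj⟩, ha, ha', hb, hb'⟩
    exact ⟨i, j, hij, ⟨a, hi, ha, ha'⟩, ⟨b, hj, hb, hb'⟩⟩

theorem getElem?_skeleton (H : List (Ev X V)) (i : ℕ) :
    (skeleton H)[i]? = H[i]?.map Ev.skel :=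
  List.getElem?_map ..

theorem getElem?_skeleton_eq_some {i : ℕ} {e : Ev X V} :
    (skeleton H)[i]? = some e ↔ ∃ e₀, H[i]? = some e₀ ∧ e₀.skel = e := by
  rw [getElem?_skeleton, Option.map_eq_some_iff]

theorem invAt_skeleton {i : ℕ} : InvAt (skeleton H) o i ↔ InvAt H o i := by
  simp [InvAt, getElem?_skeleton]

theorem rspAt_skeleton {i : ℕ} : RspAt (skeleton H) o i ↔ RspAt H o i := by
  simp [RspAt, getElem?_skeleton]

theorem isSkeleton_skeleton (H : List (Ev X V)) : IsSkeleton (skeleton H) := by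
  simp [IsSkeleton, skeleton, Function.comp_def]

theorem IsSkeleton.skel_eq (hL : IsSkeleton L) {a : Ev X V} (ha : a ∈ L) : a.skel = a := by
  rw [← hL] at ha
  obtain ⟨b, -, rfl⟩ := List.mem_map.mp ha
  exact Ev.skel_skel b

theorem IsSkeleton.of_subset (hS : IsSkeleton S) (hLS : L ⊆ S) : IsSkeleton L :=
  List.map_congr_left (fun _ ha => hS.skel_eq (hLS ha)) |>.trans L.map_id

theorem WellFormed.skeleton (hH : WellFormed H) : WellFormed (skeleton H) where
  uniqueInv o i j hi hj := hH.uniqueInv o i j (invAt_skeleton.mp hi) (invAt_skeleton.mp hj)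
  uniqueRsp o i j hi hj := hH.uniqueRsp o i j (rspAt_skeleton.mp hi) (rspAt_skeleton.mp hj)
  rspMatched j e' hj he' := by
    obtain ⟨e, hjH, rfl⟩ := getElem?_skeleton_eq_some.mp hj
    obtain ⟨i, e₀, hij, hi, he₀⟩ := hH.rspMatched j e hjH (by simpa using he')
    exact ⟨i, e₀.skel, hij, by simp [getElem?_skeleton, hi], by simpa using he₀⟩
  procSeq i j e e' hi hj he he' hp hij := by
    obtain ⟨e₀, hiH, rfl⟩ := getElem?_skeleton_eq_some.mp hi
    obtain ⟨e₀', hjH, rfl⟩ := getElem?_skeleton_eq_some.mp hj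
    obtain ⟨k, hkj, hk⟩ := hH.procSeq i j e₀ e₀' hiH hjH (by simpa using he)
      (by simpa using he') (by simpa using hp) hij
    exact ⟨k, hkj, by simpa [rspAt_skeleton] using hk⟩

theorem WellFormed.eq_of_isInv (hS : WellFormed S) {a b : Ev X V} (ha : a ∈ S) (hb : b ∈ S)
    (ha' : a.isInv = true) (hb' : b.isInv = true) (hab : a.opId = b.opId) : a = b := by
  obtain ⟨i, hi⟩ := List.mem_iff_getElem?.mp ha
  obtain ⟨j, hj⟩ := List.mem_iff_getElem?.mp hb
  obtain rfl := hS.uniqueInv a.opId i j ⟨a, hi, ha', rfl⟩ ⟨b, hj, hb', hab.symm⟩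
  exact Option.some.inj (hi.symm.trans hj)

theorem WellFormed.eq_of_not_isInv (hS : WellFormed S) {a b : Ev X V} (ha : a ∈ S) (hb : b ∈ S)
    (ha' : a.isInv = false) (hb' : b.isInv = false) (hab : a.opId = b.opId) : a = b := by
  obtain ⟨i, hi⟩ := List.mem_iff_getElem?.mp ha
  obtain ⟨j, hj⟩ := List.mem_iff_getElem?.mp hb
  obtain rfl := hS.uniqueRsp a.opId i j ⟨a, hi, ha', rfl⟩ ⟨b, hj, hb', hab.symm⟩
  exact Option.some.inj (hi.symm.trans hj)

theorem WellFormed.nodup (hS : WellFormed S) : S.Nodup := by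
  refine List.nodup_iff_sublist.mpr fun a haa => ?_
  obtain ⟨i, j, hij, hi, hj⟩ := List.pair_sublist_iff_getElem?.mp haa
  have hij' : i = j := by
    cases ha : a.isInv
    · exact hS.uniqueRsp a.opId i j ⟨a, hi, ha, rfl⟩ ⟨a, hj, ha, rfl⟩
    · exact hS.uniqueInv a.opId i j ⟨a, hi, ha, rfl⟩ ⟨a, hj, ha, rfl⟩
  omega

/-- The first invocation in `S` of the operation of `e` (`e` itself if there is none). -/
def invOf (S : List (Ev X V)) (e : Ev X V) : Ev X V :=
  (S.find? fun e' => e'.isInv && e'.opId == e.opId).getD e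

theorem WellFormed.invOf_mem (hS : WellFormed S) {e : Ev X V} (he : e ∈ S)
    (he' : e.isInv = false) : invOf S e ∈ S ∧ (invOf S e).IsInvOf e := by
  obtain ⟨j, hj⟩ := List.mem_iff_getElem?.mp he
  obtain ⟨i, e₀, -, hi, he₀⟩ := hS.rspMatched j e hj he'
  have he₀S := List.mem_of_getElem? hi
  obtain ⟨a, ha⟩ : ∃ a, S.find? (fun e' => e'.isInv && e'.opId == e.opId) = some a :=
    Option.isSome_iff_exists.mp <| List.find?_isSome.mpr
      ⟨e₀, he₀S, by simp [he₀.1, he₀.2.1]⟩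
  have hpa : a.isInv = true ∧ a.opId = e.opId := by simpa using List.find?_some ha
  obtain rfl : a = e₀ :=
    hS.eq_of_isInv (List.mem_of_find?_eq_some ha) he₀S hpa.1 he₀.1 (hpa.2.trans he₀.2.1.symm)
  rw [invOf, ha]
  exact ⟨he₀S, he₀⟩

theorem WellFormed.invOf_eq (hS : WellFormed S) {a e : Ev X V} (ha : a ∈ S)
    (ha' : a.isInv = true) (he : e ∈ S) (he' : e.isInv = false) (hop : a.opId = e.opId) :
    invOf S e = a :=
  have hinv := hS.invOf_mem he he'
  hS.eq_of_isInv hinv.1 ha hinv.2.1 ha' (hinv.2.2.1.trans hop.symm)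

/-- The operations of `S` that respond, in the order of their responses, each one invoked
right before it responds. -/
def responseOrder (S : List (Ev X V)) : List (Ev X V) :=
  (S.filter fun e => !e.isInv).flatMap fun r => [invOf S r, r]

theorem mem_responseOrder {a : Ev X V} :
    a ∈ responseOrder S ↔ ∃ r ∈ S, r.isInv = false ∧ (a = invOf S r ∨ a = r) := by
  simp [responseOrder, and_assoc]

theorem getElem?_responseOrder (k : ℕ) : (responseOrder S)[k]? =
    (S.filter fun e => !e.isInv)[k / 2]?.map (if k % 2 = 0 then invOf S else id) :=
  List.getElem?_flatMap_pair ..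

theorem WellFormed.sequential_responseOrder (hS : WellFormed S) :
    Sequential (responseOrder S) := by
  intro k e hk
  rw [getElem?_responseOrder] at hk
  obtain ⟨r, hr, rfl⟩ := Option.map_eq_some_iff.mp hk
  obtain ⟨hrS, hr'⟩ : r ∈ S ∧ r.isInv = false := by
    simpa using List.mem_filter.mp (List.mem_of_getElem? hr)
  have hinv := hS.invOf_mem hrS hr'
  refine ⟨fun h0 => by simpa [h0] using hinv.2.1, fun h1 => ⟨by simpa [h1] using hr', ?_⟩⟩
  have hk₁ : (k - 1) / 2 = k / 2 := by omega
  have hk₂ : (k - 1) % 2 = 0 := by omega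
  refine ⟨invOf S r, by simp [getElem?_responseOrder, hk₁, hk₂, hr], ?_⟩
  rw [if_neg (by omega)]
  exact hinv.2

theorem WellFormed.complete_responseOrder (hS : WellFormed S) : Complete (responseOrder S) := by
  intro o hinvk
  obtain ⟨a, ha, ha', rfl⟩ := invoked_iff.mp hinvk
  obtain ⟨r, hrS, hr', rfl | rfl⟩ := mem_responseOrder.mp ha
  · exact responded_iff.mpr ⟨r, mem_responseOrder.mpr ⟨r, hrS, hr', .inr rfl⟩, hr',
      (hS.invOf_mem hrS hr').2.2.1.symm⟩
  · simp [hr'] at ha'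

theorem not_pending_iff_responded {a : Ev X V} (ha : a ∈ S) :
    ¬Pending S a.opId ↔ Responded S a.opId := by
  cases ha' : a.isInv
  · exact iff_of_true (fun hp => hp.2 (responded_iff.mpr ⟨a, ha, ha', rfl⟩))
      (responded_iff.mpr ⟨a, ha, ha', rfl⟩)
  · simp [Pending, invoked_iff.mpr ⟨a, ha, ha', rfl⟩]

theorem WellFormed.mem_responseOrder_iff (hS : WellFormed S) {a : Ev X V} :
    a ∈ responseOrder S ↔ a ∈ S ∧ Responded S a.opId := by
  rw [mem_responseOrder, responded_iff]
  constructor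
  · rintro ⟨r, hrS, hr', rfl | rfl⟩
    · have hinv := hS.invOf_mem hrS hr'
      exact ⟨hinv.1, r, hrS, hr', hinv.2.2.1.symm⟩
    · exact ⟨hrS, _, hrS, hr', rfl⟩
  · rintro ⟨haS, r, hrS, hr', hop⟩
    cases ha' : a.isInv
    · exact ⟨a, haS, ha', .inr rfl⟩
    · exact ⟨r, hrS, hr', .inl (hS.invOf_eq haS ha' hrS hr' hop.symm).symm⟩

theorem WellFormed.nodup_responseOrder (hS : WellFormed S) : (responseOrder S).Nodup := by
  have hrsp : ∀ r ∈ S.filter (fun e => !e.isInv), r ∈ S ∧ r.isInv = false := fun r hr => by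
    simpa using List.mem_filter.mp hr
  have hopId :
      ∀ r ∈ S.filter (fun e => !e.isInv), ∀ a ∈ [invOf S r, r], a.opId = r.opId := by
    intro r hr a ha
    rcases List.mem_pair.mp ha with rfl | rfl
    exacts [(hS.invOf_mem (hrsp r hr).1 (hrsp r hr).2).2.2.1, rfl]
  refine List.nodup_flatMap.mpr ⟨fun r hr => ?_, (hS.nodup.filter _).pairwise_of_forall_ne ?_⟩
  · have hinv := (hS.invOf_mem (hrsp r hr).1 (hrsp r hr).2).2.1
    have hne : invOf S r ≠ r := fun h => by simp [h, (hrsp r hr).2] at hinv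
    simpa using hne
  · intro r hr r' hr' hne a ha ha'
    exact hne <| hS.eq_of_not_isInv (hrsp r hr).1 (hrsp r' hr').1 (hrsp r hr).2 (hrsp r' hr').2
      ((hopId r hr a ha).symm.trans (hopId r' hr' a ha'))

theorem WellFormed.isCompletion_responseOrder (hS : WellFormed S) :
    ∃ H'', IsCompletion S H'' ∧ (responseOrder S).Perm H'' := by
  classical
  refine ⟨S.filter fun e => !decide (Pending S e.opId),
    ⟨fun o => decide (Pending S o), [], by simp, by simp, by simp⟩, ?_⟩
  refine (List.perm_ext_iff_of_nodup hS.nodup_responseOrder (hS.nodup.filter _)).mpr fun a => ?_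
  rw [hS.mem_responseOrder_iff, List.mem_filter, Bool.not_eq_true', decide_eq_false_iff_not]
  exact and_congr_right fun ha => (not_pending_iff_responded ha).symm

theorem WellFormed.precedes_responseOrder (hS : WellFormed S) {o₁ o₂ : ℕ}
    (h : Precedes S o₁ o₂) (hinvk : Invoked (responseOrder S) o₂) :
    Precedes (responseOrder S) o₁ o₂ := by
  obtain ⟨i, j, hij, ⟨a, hi, ha, rfl⟩, ⟨b, hj, hb, rfl⟩⟩ := h
  obtain ⟨c, hc, hc', hco⟩ := invoked_iff.mp hinvk
  obtain ⟨r, hrS, hr', rfl | rfl⟩ := mem_responseOrder.mp hc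
  swap
  · simp [hr'] at hc'
  have hinv := hS.invOf_mem hrS hr'
  obtain ⟨k, hk⟩ := List.mem_iff_getElem?.mp hrS
  obtain ⟨j', e₀, hj'k, hj', he₀⟩ := hS.rspMatched k r hk hr'
  obtain rfl : j' = j := hS.uniqueInv b.opId j' j
    ⟨e₀, hj', he₀.1, he₀.2.1.trans (hinv.2.2.1.symm.trans hco)⟩ ⟨b, hj, hb, rfl⟩
  have har : [a, r] <+ S.filter (fun e => !e.isInv) := by
    simpa [ha, hr'] using (List.pair_sublist_iff_getElem?.mpr
      ⟨i, k, by omega, hi, hk⟩).filter (fun e => !e.isInv)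
  have hsub : [a, invOf S r] <+ responseOrder S :=
    (by simp : [a, invOf S r] <+ [invOf S a, a, invOf S r, r]).trans
      (by simpa [responseOrder] using har.flatMap fun r => [invOf S r, r])
  exact precedes_iff_sublist.mpr ⟨a, invOf S r, hsub, ha, rfl, hinv.2.1, hco⟩

theorem WellFormed.exists_linearization (hS : WellFormed S) :
    ∃ L, Linearization L S ∧ L ⊆ S ∧ ∀ e ∈ S, e.isInv = false → e ∈ L :=
  ⟨responseOrder S,
    ⟨hS.sequential_responseOrder, hS.complete_responseOrder, hS.isCompletion_responseOrder,
      fun _ _ => hS.precedes_responseOrder⟩,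
    fun _ ha => (hS.mem_responseOrder_iff.mp ha).1,
    fun e he he' => mem_responseOrder.mpr ⟨e, he, he', .inr rfl⟩⟩

theorem Sequential.isInvOf_pred (hL : Sequential L) {k : ℕ} {e : Ev X V} (hk : L[k]? = some e)
    (he : e.isInv = false) : 0 < k ∧ ∃ e', L[k - 1]? = some e' ∧ e'.IsInvOf e := by
  have hodd : k % 2 = 1 := by
    rcases Nat.mod_two_eq_zero_or_one k with h | h
    · simp [(hL k e hk).1 h] at he
    · exact h
  exact ⟨by omega, ((hL k e hk).2 hodd).2⟩

theorem Linearization.filter_isInv_subperm (hL : Linearization L S) :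
    (L.filter (·.isInv)).Subperm S := by
  obtain ⟨-, -, ⟨_, ⟨P, R, -, hR, rfl⟩, hperm⟩, -⟩ := hL
  have hR' : R.filter (·.isInv) = [] :=
    List.filter_eq_nil_iff.mpr fun e he => by simp [(hR e he).1]
  refine (hperm.filter _).subperm.trans ?_
  rw [List.filter_append, hR', List.append_nil]
  exact ((List.filter_sublist).trans List.filter_sublist).subperm

theorem Linearization.mem_of_isInv (hL : Linearization L S) {a : Ev X V} (ha : a ∈ L)
    (ha' : a.isInv = true) : a ∈ S :=
  hL.filter_isInv_subperm.subset (List.mem_filter.mpr ⟨ha, ha'⟩)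

theorem Linearization.nodup (hS : WellFormed S) (hL : Linearization L S) : L.Nodup := by
  have hinv : ∀ b, b.isInv = true → ¬[b, b] <+ L := fun b hb hbb =>
    List.nodup_iff_sublist.mp (hL.filter_isInv_subperm.nodup hS.nodup) b
      (by simpa [hb] using hbb.filter (·.isInv))
  refine List.nodup_iff_sublist.mpr fun a haa => ?_
  cases ha : a.isInv
  · -- both copies of the response are preceded by invocations of its operation, which lie in `S`
    -- and therefore coincide
    obtain ⟨i, j, hij, hi, hj⟩ := List.pair_sublist_iff_getElem?.mp haa
    obtain ⟨hi0, b, hb, hba⟩ := hL.1.isInvOf_pred hi ha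
    obtain ⟨-, c, hc, hca⟩ := hL.1.isInvOf_pred hj ha
    obtain rfl : b = c := hS.eq_of_isInv (hL.mem_of_isInv (List.mem_of_getElem? hb) hba.1)
      (hL.mem_of_isInv (List.mem_of_getElem? hc) hca.1) hba.1 hca.1 (hba.2.1.trans hca.2.1.symm)
    exact hinv b hba.1 (List.pair_sublist_iff_getElem?.mpr ⟨i - 1, j - 1, by omega, hb, hc⟩)
  · exact hinv a ha haa

theorem Linearization.subset_append_map_toRsp (hL : Linearization L S) (hLsk : IsSkeleton L) :
    L ⊆ S ++ S.map Ev.toRsp := by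
  intro a ha
  cases ha' : a.isInv
  · obtain ⟨k, hk⟩ := List.mem_iff_getElem?.mp ha
    obtain ⟨-, b, hb, hba⟩ := hL.1.isInvOf_pred hk ha'
    refine List.mem_append_right _
      (List.mem_map.mpr ⟨b, hL.mem_of_isInv (List.mem_of_getElem? hb) hba.1, ?_⟩)
    rw [hba.toRsp_eq, ← Ev.skel_eq_toRsp ha', hLsk.skel_eq ha]
  · exact List.mem_append_left _ (hL.mem_of_isInv ha ha')

theorem WellFormed.finite_setOf_linearization (hS : WellFormed S) :
    {L | IsSkeleton L ∧ Linearization L S}.Finite :=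
  (List.finite_setOf_subperm (S ++ S.map Ev.toRsp)).subset fun _ ⟨hLsk, hL⟩ =>
    (hL.nodup hS).subperm (hL.subset_append_map_toRsp hLsk)

theorem QueryReturns.queryCompletes_skeleton {v : V} (h : QueryReturns H o v) :
    QueryCompletes (skeleton H) o :=
  let ⟨i, e, hi, he, hq, hop, _⟩ := h
  ⟨i, e.skel, by simp [getElem?_skeleton, hi], by simpa using he, by simpa using hq,
    by simpa using hop⟩

theorem QueryCompletes.mono (h : QueryCompletes S o)
    (hSL : ∀ e ∈ S, e.isInv = false → e ∈ L) : QueryCompletes L o :=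
  let ⟨_, e, hi, he, hq, hop⟩ := h
  let ⟨k, hk⟩ := List.mem_iff_getElem?.mp (hSL e (List.mem_of_getElem? hi) he)
  ⟨k, e, hk, he, hq, hop⟩

theorem finite_setOf_queryReturns (H : List (Ev X V)) (o : ℕ) :
    {v | QueryReturns H o v}.Finite :=
  (H.filterMap Ev.retVal).finite_toSet.subset fun _ ⟨_, e, hi, _, _, _, hv⟩ =>
    List.mem_filterMap.mpr ⟨e, List.mem_of_getElem? hi, hv⟩

end Hist

theorem DetSpec.exists_queryReturns_tau {X V : Type} (spec : DetSpec X V) {L : List (Ev X V)}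
    {o : ℕ} (hseq : Hist.Sequential L) (hsk : Hist.IsSkeleton L) (hq : Hist.QueryCompletes L o) :
    ∃ v, Hist.QueryReturns (spec.tau L) o v := by
  obtain ⟨i, e, hi, he, hq, rfl⟩ := hq
  have hτ : (Hist.skeleton (spec.tau L))[i]? = some e := by
    rw [spec.tau_skeleton L hseq hsk]
    exact hi
  obtain ⟨e', hi', rfl⟩ := Hist.getElem?_skeleton_eq_some.mp hτ
  obtain ⟨v, hv⟩ := spec.total _ (spec.tau_mem L hseq hsk) i e' hi' (by simpa using he)
    (by simpa using hq)
  exact ⟨v, i, e', hi', by simpa using he, by simpa using hq, by simp, hv⟩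

/-- **Well-definedness of `v_min` and `v_max`**: for a well-formed history `H`,
a query `o` that returns in `H`, and a deterministic quantitative sequential
specification `spec`, the set of values that the query may return across all
linearizations of the skeleton `H?` is nonempty and finite; in particular it
has a minimum and a maximum. -/
theorem vmin_vmax_well_defined {X V : Type} [LinearOrder V]
    (H : List (Ev X V)) (spec : DetSpec X V) (o : ℕ) (v : V)
    (hwf : Hist.WellFormed H) (hq : Hist.QueryReturns H o v) :
    (linRetSet H spec o).Nonempty ∧ (linRetSet H spec o).Finite ∧
    (∃ lo ∈ linRetSet H spec o, ∀ r ∈ linRetSet H spec o, lo ≤ r) ∧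
    (∃ hi ∈ linRetSet H spec o, ∀ r ∈ linRetSet H spec o, r ≤ hi) := by
  have hS := hwf.skeleton
  obtain ⟨L, hL, hLS, hrsp⟩ := hS.exists_linearization
  have hLsk := (Hist.isSkeleton_skeleton H).of_subset hLS
  have hne : (linRetSet H spec o).Nonempty :=
    let ⟨r, hr⟩ := spec.exists_queryReturns_tau hL.1 hLsk (hq.queryCompletes_skeleton.mono hrsp)
    ⟨r, L, hLsk, hL, hr⟩
  have hfin : (linRetSet H spec o).Finite :=
    (hS.finite_setOf_linearization.biUnion fun L _ => Hist.finite_setOf_queryReturns _ o).subset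
      fun r ⟨L, hLsk, hL, hr⟩ => Set.mem_biUnion ⟨hLsk, hL⟩ hr
  exact ⟨hne, hfin, Set.exists_min_image _ id hfin hne, Set.exists_max_image _ id hfin hne⟩
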